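/- In a finite tree T with diameter D ≥ 4, if P is the unique path of length D in T and some vertex on P performs an improving swap (strictly decreasing its eccentricity), then the diameter of the resulting tree is strictly less than D. -/

import Mathlib

/-!
Removing the edge `vu` splits `T` into the side `A` of `v` and the side `B` of `u`. Both `T` and
`T'` are trees containing the forest `T - vu`, so vertices on the same side are at the same
distance in `T` and in `T'`. Hence an improving swap forces every vertex farthest from `v` in `T`
to lie in `B`, which gives `d(x, v) + ecc T v ≤ D` for `x ∈ A`, and so
`d'(x, y) ≤ d'(x, v) + ecc T' v < D` for every `y`. Two vertices of `B` keep their distance, which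
is `< D` unless they are `a` and `b`; but these are not both in `B`, as `v` lies between them.
-/

namespace NCG
open SimpleGraph

variable {V : Type*}

/-- Eccentricity of a vertex: maximum graph distance to any other vertex. -/
noncomputable def ecc [Fintype V] (G : SimpleGraph V) (x : V) : ℕ :=
  Finset.univ.sup fun y => G.dist x y

/-- Diameter: maximum eccentricity. -/
noncomputable def diam [Fintype V] (G : SimpleGraph V) : ℕ :=
  Finset.univ.sup fun x => ecc G x

/-- Radius: minimum eccentricity. -/
noncomputable def rad [Fintype V] (G : SimpleGraph V) : ℕ :=
  sInf (Set.range (ecc G))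

end NCG

namespace SimpleGraph

variable {V : Type*} {G H : SimpleGraph V} {u v x y c : V}

theorem Walk.dist_eq_add_of_mem_support (p : G.Walk x y) (hp : p.length = G.dist x y)
    (hc : c ∈ p.support) : G.dist x y = G.dist x c + G.dist c y := by
  classical
  refine le_antisymm (Reachable.dist_triangle_left ⟨p.takeUntil c hc⟩ y) ?_
  have hlen := congrArg Walk.length (p.take_spec hc)
  rw [Walk.length_append] at hlen
  have := dist_le (p.takeUntil c hc)
  have := dist_le (p.dropUntil c hc)
  omega

theorem IsAcyclic.length_eq_dist (hG : G.IsAcyclic) {p : G.Walk x y} (hp : p.IsPath) :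
    p.length = G.dist x y := by
  obtain ⟨q, hq, hql⟩ := Reachable.exists_path_of_dist p.reachable
  have hpq : p = q := congrArg Subtype.val ((hG.subsingleton_path x y).elim ⟨p, hp⟩ ⟨q, hq⟩)
  rw [← hql, hpq]

theorem IsAcyclic.dist_eq_of_le (hG : G.IsAcyclic) (hHG : H ≤ G) (hr : H.Reachable x y) :
    G.dist x y = H.dist x y := by
  obtain ⟨q, hq, hql⟩ := hr.exists_path_of_dist
  rw [← hql, ← Walk.length_mapLe hHG q]
  exact (hG.length_eq_dist (hq.mapLe hHG)).symm

theorem IsAcyclic.dist_eq_dist_of_le {G' : SimpleGraph V} (hG : G.IsAcyclic) (hG' : G'.IsAcyclic)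
    (hHG : H ≤ G) (hHG' : H ≤ G') (hr : H.Reachable x y) : G.dist x y = G'.dist x y := by
  rw [hG.dist_eq_of_le hHG hr, hG'.dist_eq_of_le hHG' hr]

theorem Reachable.reachable_deleteEdges_or (h : G.Reachable v x) (u : V) :
    (G.deleteEdges {s(v, u)}).Reachable v x ∨ (G.deleteEdges {s(v, u)}).Reachable u x := by
  suffices ∀ {y z : V}, G.Walk y z →
      ((G.deleteEdges {s(v, u)}).Reachable v z ∨ (G.deleteEdges {s(v, u)}).Reachable u z) →
      ((G.deleteEdges {s(v, u)}).Reachable v y ∨ (G.deleteEdges {s(v, u)}).Reachable u y) from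
    h.elim fun p => this p.reverse (Or.inl .rfl)
  intro y z p
  induction p with
  | nil => exact id
  | @cons y c z hadj q ih =>
    intro hz
    by_cases he : s(y, c) = s(v, u)
    · rcases Sym2.eq_iff.mp he with ⟨rfl, -⟩ | ⟨rfl, -⟩
      · exact Or.inl .rfl
      · exact Or.inr .rfl
    · have hadj' : (G.deleteEdges {s(v, u)}).Adj y c := deleteEdges_adj.mpr ⟨hadj, he⟩
      exact (ih hz).imp (·.trans hadj'.reachable.symm) (·.trans hadj'.reachable.symm)

theorem IsBridge.mem_edges_of_reachable_deleteEdges (hb : G.IsBridge s(v, u))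
    (hx : (G.deleteEdges {s(v, u)}).Reachable v x)
    (hy : (G.deleteEdges {s(v, u)}).Reachable u y) (p : G.Walk x y) : s(v, u) ∈ p.edges := by
  by_contra hp
  exact hb (hx.trans ((reachable_deleteEdges_iff_exists_walk.mpr ⟨p, hp⟩).trans hy.symm))

theorem IsBridge.dist_eq_of_reachable_deleteEdges (hb : G.IsBridge s(v, u)) (hvu : G.Adj v u)
    (hx : (G.deleteEdges {s(v, u)}).Reachable v x)
    (hy : (G.deleteEdges {s(v, u)}).Reachable u y) :
    G.dist x y = G.dist x v + 1 + G.dist u y := by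
  have hvy : G.Reachable v y := hvu.reachable.trans (hy.mono (deleteEdges_le _))
  obtain ⟨p, hp⟩ := ((hx.mono (deleteEdges_le _)).symm.trans hvy).exists_walk_length_eq_dist
  obtain ⟨q, hq⟩ := hvy.exists_walk_length_eq_dist
  have hpv := p.fst_mem_support_of_mem_edges (hb.mem_edges_of_reachable_deleteEdges hx hy p)
  have hqu := q.snd_mem_support_of_mem_edges (hb.mem_edges_of_reachable_deleteEdges .rfl hy q)
  rw [p.dist_eq_add_of_mem_support hp hpv, q.dist_eq_add_of_mem_support hq hqu,
    dist_eq_one_iff_adj.mpr hvu, add_assoc]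

theorem IsBridge.dist_lt_dist_add_dist (hb : G.IsBridge s(v, u)) (hvu : G.Adj v u)
    (hx : (G.deleteEdges {s(v, u)}).Reachable u x)
    (hy : (G.deleteEdges {s(v, u)}).Reachable u y) : G.dist x y < G.dist x v + G.dist v y := by
  have hvx := hb.dist_eq_of_reachable_deleteEdges hvu .rfl hx
  have hvy := hb.dist_eq_of_reachable_deleteEdges hvu .rfl hy
  have := (hx.mono (deleteEdges_le _)).symm.dist_triangle_left y
  have : G.dist x u = G.dist u x := dist_comm
  have : G.dist x v = G.dist v x := dist_comm
  rw [dist_self] at hvx hvy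
  omega

end SimpleGraph

namespace NCG
open SimpleGraph

variable {V : Type*}

section

variable [Fintype V]

theorem dist_le_ecc (G : SimpleGraph V) (x y : V) : G.dist x y ≤ ecc G x :=
  Finset.le_sup (Finset.mem_univ y)

theorem ecc_le_diam (G : SimpleGraph V) (x : V) : ecc G x ≤ diam G :=
  Finset.le_sup (Finset.mem_univ x)

theorem dist_le_diam (G : SimpleGraph V) (x y : V) : G.dist x y ≤ diam G :=
  (dist_le_ecc G x y).trans (ecc_le_diam G x)

theorem exists_dist_eq_ecc (G : SimpleGraph V) (x : V) : ∃ z, G.dist x z = ecc G x := by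
  have : Nonempty V := ⟨x⟩
  obtain ⟨z, -, hz⟩ := Finset.exists_mem_eq_sup Finset.univ Finset.univ_nonempty (G.dist x)
  exact ⟨z, hz.symm⟩

theorem diam_lt_of_forall_dist_lt {G : SimpleGraph V} {n : ℕ} (hn : 0 < n)
    (h : ∀ x y, G.dist x y < n) : diam G < n :=
  (Finset.sup_lt_iff hn).mpr fun x _ => (Finset.sup_lt_iff hn).mpr fun y _ => h x y

variable {T T' : SimpleGraph V} {v u x y : V}

theorem exists_reachable_deleteEdges_dist_eq_ecc (hT : T.IsTree) (hT' : T'.IsAcyclic)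
    (hle : T.deleteEdges {s(v, u)} ≤ T') (himp : ecc T' v < ecc T v) :
    ∃ z, (T.deleteEdges {s(v, u)}).Reachable u z ∧ T.dist v z = ecc T v := by
  obtain ⟨z, hz⟩ := exists_dist_eq_ecc T v
  refine ⟨z, ((hT.connected v z).reachable_deleteEdges_or u).resolve_left fun hvz => ?_, hz⟩
  have hsame := hT'.dist_eq_dist_of_le hT.isAcyclic hle (deleteEdges_le _) hvz
  have := dist_le_ecc T' v z
  omega

theorem dist_add_ecc_le_diam (hT : T.IsTree) (hT' : T'.IsAcyclic) (hvu : T.Adj v u)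
    (hle : T.deleteEdges {s(v, u)} ≤ T') (himp : ecc T' v < ecc T v)
    (hx : (T.deleteEdges {s(v, u)}).Reachable v x) : T.dist x v + ecc T v ≤ diam T := by
  have hb : T.IsBridge s(v, u) := isAcyclic_iff_forall_isBridge.mp hT.isAcyclic hvu
  obtain ⟨z, hz, hvz⟩ := exists_reachable_deleteEdges_dist_eq_ecc hT hT' hle himp
  have hxz := hb.dist_eq_of_reachable_deleteEdges hvu hx hz
  have hvz' := hb.dist_eq_of_reachable_deleteEdges hvu .rfl hz
  have := dist_le_diam T x z
  rw [dist_self] at hvz'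
  omega

theorem dist_lt_diam_of_reachable_deleteEdges (hT : T.IsTree) (hT' : T'.IsTree)
    (hvu : T.Adj v u) (hle : T.deleteEdges {s(v, u)} ≤ T') (himp : ecc T' v < ecc T v)
    (hx : (T.deleteEdges {s(v, u)}).Reachable v x) (y : V) : T'.dist x y < diam T := by
  have hxv := hT'.isAcyclic.dist_eq_dist_of_le hT.isAcyclic hle (deleteEdges_le _) hx.symm
  have := hT'.connected.dist_triangle (u := x) (v := v) (w := y)
  have := dist_le_ecc T' v y
  have := dist_add_ecc_le_diam hT hT'.isAcyclic hvu hle himp hx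
  omega

end

theorem stmt18_general [Fintype V] (T : SimpleGraph V) (hT : T.IsTree)
    (a b : V) (p : T.Path a b)
    (huniq : ∀ x y : V, T.dist x y = diam T → (x = a ∧ y = b) ∨ (x = b ∧ y = a))
    (v : V) (hv : v ∈ p.1.support)
    (T' : SimpleGraph V) (hT't : T'.IsTree)
    (u w : V) (hvu : T.Adj v u)
    (hT'edges : T'.edgeSet = (T.edgeSet \ {s(v, u)}) ∪ {s(v, w)})
    (himp : ecc T' v < ecc T v) :
    diam T' < diam T := by
  have hle : T.deleteEdges {s(v, u)} ≤ T' := edgeSet_subset_edgeSet.mp <| by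
    rw [edgeSet_deleteEdges, hT'edges]
    exact Set.subset_union_left
  have hpath : p.1.length = T.dist a b := hT.isAcyclic.length_eq_dist p.2
  have hvab := p.1.dist_eq_add_of_mem_support hpath hv
  have hb : T.IsBridge s(v, u) := isAcyclic_iff_forall_isBridge.mp hT.isAcyclic hvu
  refine diam_lt_of_forall_dist_lt ((Nat.zero_le _).trans_lt himp |>.trans_le (ecc_le_diam T v))
    fun x y => ?_
  rcases (hT.connected v x).reachable_deleteEdges_or u with hx | hx
  · exact dist_lt_diam_of_reachable_deleteEdges hT hT't hvu hle himp hx y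
  rcases (hT.connected v y).reachable_deleteEdges_or u with hy | hy
  · exact dist_comm (G := T') ▸ dist_lt_diam_of_reachable_deleteEdges hT hT't hvu hle himp hy x
  have hxy := hx.symm.trans hy
  rw [hT't.isAcyclic.dist_eq_dist_of_le hT.isAcyclic hle (deleteEdges_le _) hxy]
  refine (dist_le_diam T x y).lt_of_ne fun hD => ?_
  rcases huniq x y hD with ⟨rfl, rfl⟩ | ⟨rfl, rfl⟩
  · exact absurd hvab (hb.dist_lt_dist_add_dist hvu hx hy).ne
  · exact absurd hvab (hb.dist_lt_dist_add_dist hvu hy hx).ne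

/-- if a tree has diameter D ≥ 4, the path P of length D is
unique, and a vertex on P performs an improving swap, then the diameter of the
resulting tree is strictly smaller. -/
theorem stmt18 [Fintype V] [DecidableEq V] (T : SimpleGraph V) (hT : T.IsTree)
    (hdiam : 4 ≤ diam T)
    (a b : V) (p : T.Path a b) (hlen : p.1.length = diam T)
    (huniq : ∀ x y : V, T.dist x y = diam T → (x = a ∧ y = b) ∨ (x = b ∧ y = a))
    (v : V) (hv : v ∈ p.1.support)
    (T' : SimpleGraph V) (hT't : T'.IsTree)
    (u w : V) (hvu : T.Adj v u)
    (hT'edges : T'.edgeSet = (T.edgeSet \ {s(v, u)}) ∪ {s(v, w)})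
    (himp : ecc T' v < ecc T v) :
    diam T' < diam T :=
  stmt18_general T hT a b p huniq v hv T' hT't u w hvu hT'edges himp

end NCG
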